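/- arXiv:2407.15381 — 3 statements merged into one kernel-verified Lean document; each statement's English description precedes it below -/
import Mathlib

section
/- Fix a prime p. Let R be a commutative ring such that for every prime ideal 𝔭 of R containing p, the localization R_𝔭 is p-torsion free (multiplication by p is injective on R_𝔭). Then the p-adic completion R̂ = lim_n R/p^nR is p-torsion free. -/
/-!
Regularity of `p` is a local property, and at a maximal ideal not containing `p` it is a unit, so
`p` is a non-zero-divisor of `R`. For a regular element `r`, if `r x ∈ r^(n+1) R` then
`x ∈ r^n R`; applied levelwise to a compatible system killed by `r`, this shows that the
system vanishes.
-/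

theorem isSMulRegular_of_localization_atMaximal {R : Type*} [CommRing R] {r : R}
    (h : ∀ (P : Ideal R) [P.IsMaximal], r ∈ P → IsSMulRegular (Localization.AtPrime P) r) :
    IsSMulRegular R r := by
  have hloc (P : Ideal R) [P.IsMaximal] : IsSMulRegular (Localization.AtPrime P) r := by
    by_cases hrP : r ∈ P
    · exact h P hrP
    · exact (isSMulRegular_algebraMap_iff _).mp <| IsUnit.isSMulRegular _ <|
        IsLocalization.map_units (Localization.AtPrime P) (⟨r, hrP⟩ : P.primeCompl)
  refine injective_of_isLocalized_maximal (fun P _ ↦ Localization.AtPrime P)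
    (fun P _ ↦ Algebra.linearMap R _) (fun P _ ↦ Localization.AtPrime P)
    (fun P _ ↦ Algebra.linearMap R _) (r • LinearMap.id) fun P _ ↦ ?_
  rw [map_smul, IsLocalizedModule.map_id]
  exact hloc P

theorem mem_span_singleton_pow_smul_top_iff {R M : Type*} [CommRing R] [AddCommGroup M]
    [Module R M] {r : R} {n : ℕ} {x : M} :
    x ∈ (Ideal.span {r}) ^ n • (⊤ : Submodule R M) ↔ ∃ m : M, r ^ n • m = x := by
  simp [Ideal.span_singleton_pow, Submodule.ideal_span_singleton_smul,
    Submodule.mem_smul_pointwise_iff_exists]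

theorem AdicCompletion.isSMulRegular_span_singleton {R M : Type*} [CommRing R] [AddCommGroup M]
    [Module R M] {r : R} (hr : IsSMulRegular M r) :
    IsSMulRegular (AdicCompletion (Ideal.span {r}) M) r := by
  refine IsSMulRegular.of_right_eq_zero_of_smul fun x hx ↦ AdicCompletion.ext fun n ↦ ?_
  obtain ⟨m, hm⟩ := Submodule.Quotient.mk_surjective _ (x.val (n + 1))
  have hrm : r • m ∈ (Ideal.span {r}) ^ (n + 1) • (⊤ : Submodule R M) := by
    rw [← Submodule.Quotient.mk_eq_zero, Submodule.Quotient.mk_smul, hm, ← val_smul_apply, hx]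
    rfl
  obtain ⟨m', hm'⟩ := mem_span_singleton_pow_smul_top_iff.mp hrm
  have hmem : m ∈ (Ideal.span {r}) ^ n • (⊤ : Submodule R M) :=
    mem_span_singleton_pow_smul_top_iff.mpr
      ⟨m', hr (show r • (r ^ n • m') = r • m by rw [← hm', pow_succ', mul_smul])⟩
  rw [← x.prop n.le_succ, ← hm]
  exact (Submodule.Quotient.mk_eq_zero _).mpr hmem

theorem stmt3_general (p : ℕ) {R : Type*} [CommRing R]
    (h : ∀ (P : Ideal R) [P.IsPrime], (p : R) ∈ P →
      Function.Injective fun a : Localization.AtPrime P => (p : Localization.AtPrime P) * a) :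
    Function.Injective fun c : AdicCompletion (Ideal.span {(p : R)}) R =>
      (p : AdicCompletion (Ideal.span {(p : R)}) R) * c := by
  have hR : IsSMulRegular R (p : R) := isSMulRegular_of_localization_atMaximal fun P _ hpP ↦ by
    have : IsSMulRegular (Localization.AtPrime P) (p : Localization.AtPrime P) := h P hpP
    rwa [← map_natCast (algebraMap R _), isSMulRegular_algebraMap_iff] at this
  have := AdicCompletion.isSMulRegular_span_singleton hR
  rwa [← isSMulRegular_algebraMap_iff (AdicCompletion (Ideal.span {(p : R)}) R),
    map_natCast] at this

/-- Fix a prime `p`. If for every prime ideal `𝔭` of `R` containing `p`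
the localization `R_𝔭` is `p`-torsion free, then the `p`-adic completion
`R̂ = lim_n R/p^nR` is `p`-torsion free. -/
theorem stmt3 (p : ℕ) (hp : p.Prime) {R : Type*} [CommRing R]
    (h : ∀ (P : Ideal R) [P.IsPrime], (p : R) ∈ P →
      Function.Injective fun a : Localization.AtPrime P => (p : Localization.AtPrime P) * a) :
    Function.Injective fun c : AdicCompletion (Ideal.span {(p : R)}) R =>
      (p : AdicCompletion (Ideal.span {(p : R)}) R) * c :=
  stmt3_general p h
end

section
/- Fix a prime p. Let B be a p-torsion-free commutative ring with two Frobenius lifts φ₁, φ₂ and associated δ-operators δ₁, δ₂ such that δ₁(a) − δ₂(a) ∈ pB for all a ∈ B; extend everything to B[1/p]. Let I ⊆ B be an ideal containing p. Then the B-subalgebras of B[1/p] given by adjoin_B{ δ₁^i(x/p) : x ∈ I, i ≥ 0 } and adjoin_B{ δ₂^i(x/p) : x ∈ I, i ≥ 0 } are equal. -/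
/-!
Let `A = adjoin_B {δ₁^i(x/p)}`; it is `δ₁`-stable, hence `ψ₁`-stable. Since
`p (δ₂ - δ₁) = ψ₂ - ψ₁`, it suffices that `ψ₂ y ≡ ψ₁ y mod pA` for `y ∈ A`. This alone does not
propagate from `y` to `δ₁ y`; the invariant that does is
`ψ₂ (ψ₁^k y) ≡ ψ₁^(k+1) y mod p^(k+1) A` for all `k`. For each `k` the elements satisfying it form a
subring, and it passes from `y` to `δ₁ y = (ψ₁ y - y^p)/p` because `a ≡ b mod pⁿ` with `n ≥ 1`
gives `aᵖ ≡ bᵖ mod pⁿ⁺¹`. Running the same identity in the other direction, `ψ₁ y = y^p + p δ₁ y`,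
turns `φ₂ ≡ φ₁ mod p²` on `B` (the hypothesis on `δ₁ - δ₂`) into the invariant with `p^(k+2)` on
`B`, which is what the generators `x/p` need.
-/

namespace Subring

variable {R : Type*} [CommRing R]

def congrLocus (S : Subring R) (c : R) (g₁ g₂ : R →+* R) : Subring R where
  carrier := {y | g₁ y ∈ S ∧ g₂ y ∈ S ∧ ∃ z ∈ S, g₂ y - g₁ y = c * z}
  zero_mem' := ⟨by simp, by simp, 0, S.zero_mem, by simp⟩
  one_mem' := ⟨by simp, by simp, 0, S.zero_mem, by simp⟩
  add_mem' := by
    rintro x y ⟨hx₁, hx₂, z, hz, hxz⟩ ⟨hy₁, hy₂, w, hw, hyw⟩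
    refine ⟨by simpa using add_mem hx₁ hy₁, by simpa using add_mem hx₂ hy₂,
      z + w, add_mem hz hw, ?_⟩
    simp only [map_add]
    linear_combination hxz + hyw
  mul_mem' := by
    rintro x y ⟨hx₁, hx₂, z, hz, hxz⟩ ⟨hy₁, hy₂, w, hw, hyw⟩
    refine ⟨by simpa using mul_mem hx₁ hy₁, by simpa using mul_mem hx₂ hy₂,
      z * g₂ y + g₁ x * w, add_mem (mul_mem hz hy₂) (mul_mem hx₁ hw), ?_⟩
    simp only [map_mul]
    linear_combination g₂ y * hxz + g₁ x * hyw
  neg_mem' := by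
    rintro x ⟨hx₁, hx₂, z, hz, hxz⟩
    refine ⟨by simpa using neg_mem hx₁, by simpa using neg_mem hx₂, -z, neg_mem hz, ?_⟩
    simp only [map_neg]
    linear_combination -hxz

variable {S S' : Subring R} {c : R} {g₁ g₂ : R →+* R} {x : R}

theorem mem_congrLocus_mul_iff {f : R →+* R} :
    x ∈ S.congrLocus c (g₁ * f) (g₂ * f) ↔ f x ∈ S.congrLocus c g₁ g₂ :=
  Iff.rfl

theorem congrLocus_mono (hS : S ≤ S') : S.congrLocus c g₁ g₂ ≤ S'.congrLocus c g₁ g₂ :=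
  fun _ ⟨h₁, h₂, z, hz, h⟩ => ⟨hS h₁, hS h₂, z, hS hz, h⟩

theorem congrLocus_mul_le {d : R} (hd : d ∈ S) :
    S.congrLocus (c * d) g₁ g₂ ≤ S.congrLocus c g₁ g₂ :=
  fun _ ⟨h₁, h₂, z, hz, h⟩ => ⟨h₁, h₂, d * z, mul_mem hd hz, by rw [h, mul_assoc]⟩

variable {p n : ℕ}

theorem natCast_mul_mem_congrLocus (hx : x ∈ S.congrLocus c g₁ g₂) :
    (p : R) * x ∈ S.congrLocus (p * c) g₁ g₂ := by
  obtain ⟨h₁, h₂, z, hz, h⟩ := hx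
  refine ⟨?_, ?_, z, hz, ?_⟩
  · simpa using mul_mem (natCast_mem S p) h₁
  · simpa using mul_mem (natCast_mem S p) h₂
  · simp only [map_mul, map_natCast]
    linear_combination (p : R) * h

theorem mem_congrLocus_of_natCast_mul_mem (hp : IsLeftRegular (p : R)) (hx : g₁ x ∈ S)
    (h : (p : R) * x ∈ S.congrLocus ((p : R) ^ (n + 1)) g₁ g₂) :
    x ∈ S.congrLocus ((p : R) ^ n) g₁ g₂ := by
  obtain ⟨-, -, z, hz, h⟩ := h
  have hdiff : g₂ x - g₁ x = (p : R) ^ n * z :=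
    hp (by simp only [map_mul, map_natCast] at h; linear_combination h)
  refine ⟨hx, ?_, z, hz, hdiff⟩
  rw [← sub_add_cancel (g₂ x) (g₁ x), hdiff]
  exact add_mem (mul_mem (pow_mem (natCast_mem S p) n) hz) hx

theorem pow_mem_congrLocus (hn : n ≠ 0) (hx : x ∈ S.congrLocus ((p : R) ^ n) g₁ g₂) :
    x ^ p ∈ S.congrLocus ((p : R) ^ (n + 1)) g₁ g₂ := by
  obtain ⟨h₁, h₂, z, hz, h⟩ := hx
  set a : S := ⟨g₂ x, h₂⟩
  set b : S := ⟨g₁ x, h₁⟩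
  have hab : a - b = (p : S) ^ n * ⟨z, hz⟩ := Subtype.ext (by simpa using h)
  have hdvd : (p : S) ∣ a - b := hab ▸ (dvd_pow_self _ hn).mul_right _
  obtain ⟨w, hw⟩ : (p : S) ^ (n + 1) ∣ a ^ p - b ^ p := by
    rw [← geom_sum₂_mul, hab, pow_succ']
    exact mul_dvd_mul (dvd_geom_sum₂_self hdvd) (dvd_mul_right _ _)
  refine ⟨by simpa using pow_mem h₁ p, by simpa using pow_mem h₂ p, w, w.2, ?_⟩
  simpa [a, b] using congrArg Subtype.val hw

end Subring

section Delta

variable {R : Type*} [CommRing R] {p : ℕ} {ψ : R →+* R} {δ : R → R}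

theorem frobenius_eq_pow_add (hδ : ∀ y, (p : R) * δ y = ψ y - y ^ p) (y : R) :
    ψ y = y ^ p + p * δ y := by
  linear_combination -hδ y

variable (hp : IsLeftRegular (p : R)) (hδ : ∀ y, (p : R) * δ y = ψ y - y ^ p)
include hp hδ

theorem delta_mul (x y : R) : δ (x * y) = x ^ p * δ y + y ^ p * δ x + p * δ x * δ y := hp <| by
  dsimp only
  rw [hδ, map_mul, frobenius_eq_pow_add hδ x, frobenius_eq_pow_add hδ y]
  ring

theorem delta_add_mem (hprime : p.Prime) {S : Subring R} {x y : R} (hx : x ∈ S) (hy : y ∈ S)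
    (hδx : δ x ∈ S) (hδy : δ y ∈ S) : δ (x + y) ∈ S := by
  obtain ⟨r, hr⟩ := exists_add_pow_prime_eq hprime (⟨x, hx⟩ : S) ⟨y, hy⟩
  have hr' : (x + y) ^ p = x ^ p + y ^ p + p * x * y * r := by simpa using congrArg Subtype.val hr
  have : δ (x + y) = δ x + δ y - x * y * r := hp <| by
    dsimp only
    rw [hδ, map_add, frobenius_eq_pow_add hδ x, frobenius_eq_pow_add hδ y, hr']
    ring
  rw [this]
  exact sub_mem (add_mem hδx hδy) (mul_mem (mul_mem hx hy) r.2)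

theorem delta_mem_adjoin (hprime : p.Prime) {B : Type*} [CommRing B] [Algebra B R] {s : Set R}
    (hB : ∀ b, δ (algebraMap B R b) ∈ Algebra.adjoin B s) (hs : ∀ y ∈ s, δ y ∈ Algebra.adjoin B s)
    {y : R} (hy : y ∈ Algebra.adjoin B s) : δ y ∈ Algebra.adjoin B s := by
  induction hy using Algebra.adjoin_induction with
  | mem y hy => exact hs y hy
  | algebraMap b => exact hB b
  | add x y hx hy hδx hδy =>
    exact delta_add_mem hp hδ hprime (S := (Algebra.adjoin B s).toSubring) hx hy hδx hδy
  | mul x y hx hy hδx hδy =>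
    rw [delta_mul hp hδ]
    exact add_mem (add_mem (mul_mem (pow_mem hx p) hδy) (mul_mem (pow_mem hy p) hδx))
      (mul_mem (mul_mem (natCast_mem _ p) hδx) hδy)

end Delta

section FrobeniusLifts

open Subring

variable {R : Type*} [CommRing R] {p : ℕ} {ψ ψ' : R →+* R} {δ δ' : R → R}

theorem frobenius_mapsTo (hδ : ∀ y, (p : R) * δ y = ψ y - y ^ p) {S : Subring R}
    (hS : Set.MapsTo δ S S) : Set.MapsTo ψ S S := fun y hy => by
  rw [SetLike.mem_coe, frobenius_eq_pow_add hδ]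
  exact add_mem (pow_mem hy p) (mul_mem (natCast_mem S p) (hS hy))

variable {S : Subring R} {g₁ g₂ : R →+* R} {n : ℕ} {y : R}

theorem frobenius_mem_congrLocus (hδ : ∀ y, (p : R) * δ y = ψ y - y ^ p) (hn : n ≠ 0)
    (hy : y ∈ S.congrLocus ((p : R) ^ n) g₁ g₂) (hδy : δ y ∈ S.congrLocus ((p : R) ^ n) g₁ g₂) :
    ψ y ∈ S.congrLocus ((p : R) ^ (n + 1)) g₁ g₂ := by
  rw [frobenius_eq_pow_add hδ, pow_succ']
  exact add_mem (pow_succ' (p : R) n ▸ pow_mem_congrLocus hn hy) (natCast_mul_mem_congrLocus hδy)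

theorem delta_mem_congrLocus (hp : IsLeftRegular (p : R)) (hδ : ∀ y, (p : R) * δ y = ψ y - y ^ p)
    (hn : n ≠ 0) (hy : y ∈ S.congrLocus ((p : R) ^ n) g₁ g₂)
    (hψy : ψ y ∈ S.congrLocus ((p : R) ^ (n + 1)) g₁ g₂) (hδy : g₁ (δ y) ∈ S) :
    δ y ∈ S.congrLocus ((p : R) ^ n) g₁ g₂ := by
  refine mem_congrLocus_of_natCast_mul_mem hp hδy ?_
  rw [hδ]
  exact sub_mem hψy (pow_mem_congrLocus hn hy)

theorem delta_mem_of_delta_mem_of_mem_congrLocus (hp : IsLeftRegular (p : R))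
    (hδ : ∀ y, (p : R) * δ y = ψ y - y ^ p) (hδ' : ∀ y, (p : R) * δ' y = ψ' y - y ^ p)
    (hy : y ∈ S.congrLocus (p : R) ψ ψ') (hδy : δ y ∈ S) : δ' y ∈ S := by
  obtain ⟨-, -, z, hz, h⟩ := hy
  have : δ' y = δ y + z := hp <| by
    dsimp only
    linear_combination hδ' y - hδ y + h
  exact this ▸ add_mem hδy hz

theorem mem_congrLocus_iterate (hδ : ∀ y, (p : R) * δ y = ψ y - y ^ p) {m : ℕ} (hm : m ≠ 0)
    (hS : Set.MapsTo δ S S)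
    (h₀ : ∀ y ∈ S, y ∈ S.congrLocus ((p : R) ^ m) ψ ψ') (k : ℕ) {y : R} (hy : y ∈ S) :
    y ∈ S.congrLocus ((p : R) ^ (k + m)) (ψ ^ (k + 1)) (ψ' * ψ ^ k) := by
  induction k generalizing y with
  | zero => simpa using h₀ y hy
  | succ k ih =>
    rw [pow_succ ψ (k + 1), pow_succ ψ k, ← mul_assoc, mem_congrLocus_mul_iff,
      show k + 1 + m = k + m + 1 by omega]
    exact frobenius_mem_congrLocus hδ (by omega) (ih hy) (ih (hS hy))

variable (hp : IsLeftRegular (p : R)) (hδ : ∀ y, (p : R) * δ y = ψ y - y ^ p)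
include hp hδ

theorem iterate_delta_mem_congrLocus (hS : Set.MapsTo δ S S) {y : R} (hy : y ∈ S)
    (h : ∀ k, y ∈ S.congrLocus ((p : R) ^ (k + 1)) (ψ ^ (k + 1)) (ψ' * ψ ^ k)) (i k : ℕ) :
    δ^[i] y ∈ S.congrLocus ((p : R) ^ (k + 1)) (ψ ^ (k + 1)) (ψ' * ψ ^ k) := by
  induction i generalizing k with
  | zero => exact h k
  | succ i ih =>
    rw [Function.iterate_succ_apply']
    refine delta_mem_congrLocus hp hδ (by omega) (ih k) ?_ ?_
    · rw [← mem_congrLocus_mul_iff, mul_assoc, ← pow_succ, ← pow_succ]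
      exact ih (k + 1)
    · rw [RingHom.coe_pow]
      exact (frobenius_mapsTo hδ hS).iterate (k + 1) (hS (hS.iterate i hy))

end FrobeniusLifts

section Adjoin

open Subring Function

variable {B R : Type*} [CommRing B] [CommRing R] [Algebra B R] {p : ℕ}

theorem algebraMap_mem_congrLocus {φ₁ φ₂ : B →+* B} {δB₁ δB₂ : B → B}
    (hδB₁ : ∀ a : B, (p : B) * δB₁ a = φ₁ a - a ^ p)
    (hδB₂ : ∀ a : B, (p : B) * δB₂ a = φ₂ a - a ^ p)
    (hdiff : ∀ a : B, ∃ c : B, δB₁ a - δB₂ a = (p : B) * c) {ψ₁ ψ₂ : R →+* R}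
    (hψ₁ : ∀ b, ψ₁ (algebraMap B R b) = algebraMap B R (φ₁ b))
    (hψ₂ : ∀ b, ψ₂ (algebraMap B R b) = algebraMap B R (φ₂ b)) (b : B) :
    algebraMap B R b ∈ (algebraMap B R).range.congrLocus ((p : R) ^ 2) ψ₁ ψ₂ := by
  obtain ⟨c, hc⟩ := hdiff b
  refine ⟨hψ₁ b ▸ ⟨φ₁ b, rfl⟩, hψ₂ b ▸ ⟨φ₂ b, rfl⟩, algebraMap B R (-c), ⟨-c, rfl⟩, ?_⟩
  rw [hψ₁, hψ₂, ← map_sub, ← map_natCast (algebraMap B R), ← map_pow, ← map_mul]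
  congr 1
  linear_combination hδB₁ b - hδB₂ b - (p : B) * hc

theorem delta_algebraMap {φ : B →+* B} {δB : B → B} (hδB : ∀ a : B, (p : B) * δB a = φ a - a ^ p)
    {ψ : R →+* R} (hψ : ∀ b, ψ (algebraMap B R b) = algebraMap B R (φ b)) {δ : R → R}
    (hp : IsLeftRegular (p : R)) (hδ : ∀ y, (p : R) * δ y = ψ y - y ^ p) (b : B) :
    δ (algebraMap B R b) = algebraMap B R (δB b) := hp <| by
  dsimp only
  rw [hδ, hψ, ← map_natCast (algebraMap B R), ← map_mul, hδB, map_sub, map_pow]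

theorem adjoin_iterate_delta_le (hprime : p.Prime) {u : R} (hu : (p : R) * u = 1)
    {ψ₁ ψ₂ : R →+* R} {δ₁ δ₂ : R → R}
    (hδ₁ : ∀ y, (p : R) * δ₁ y = ψ₁ y - y ^ p) (hδ₂ : ∀ y, (p : R) * δ₂ y = ψ₂ y - y ^ p)
    (hδ₁B : ∀ b, δ₁ (algebraMap B R b) ∈ (algebraMap B R).range)
    (hψB : ∀ b, algebraMap B R b ∈ (algebraMap B R).range.congrLocus ((p : R) ^ 2) ψ₁ ψ₂)
    (s : Set B) :
    Algebra.adjoin B {y | ∃ x ∈ s, ∃ i : ℕ, y = δ₂^[i] (algebraMap B R x * u)} ≤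
      Algebra.adjoin B {y | ∃ x ∈ s, ∃ i : ℕ, y = δ₁^[i] (algebraMap B R x * u)} := by
  set A := Algebra.adjoin B {y | ∃ x ∈ s, ∃ i : ℕ, y = δ₁^[i] (algebraMap B R x * u)}
  have hp : IsLeftRegular (p : R) := (IsUnit.of_mul_eq_one _ hu).isRegular.left
  have hgen_mem (x : B) (hx : x ∈ s) : algebraMap B R x * u ∈ A :=
    Algebra.subset_adjoin ⟨x, hx, 0, rfl⟩
  have hrange : (algebraMap B R).range ≤ A.toSubring := by
    rintro _ ⟨b, rfl⟩
    exact A.algebraMap_mem b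
  have hAδ₁ : Set.MapsTo δ₁ A A := fun y hy => delta_mem_adjoin hp hδ₁ hprime
    (fun b => hrange (hδ₁B b))
    (by
      rintro _ ⟨x, hx, i, rfl⟩
      exact Algebra.subset_adjoin ⟨x, hx, i + 1, (iterate_succ_apply' ..).symm⟩) hy
  have hBk (k : ℕ) (b : B) : algebraMap B R b ∈
      (algebraMap B R).range.congrLocus ((p : R) ^ (k + 2)) (ψ₁ ^ (k + 1)) (ψ₂ * ψ₁ ^ k) :=
    mem_congrLocus_iterate hδ₁ two_ne_zero (by rintro _ ⟨b, rfl⟩; exact hδ₁B b)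
      (by rintro _ ⟨b, rfl⟩; exact hψB b) k ⟨b, rfl⟩
  have hA : ∀ y ∈ A, ∀ k,
      y ∈ A.toSubring.congrLocus ((p : R) ^ (k + 1)) (ψ₁ ^ (k + 1)) (ψ₂ * ψ₁ ^ k) := by
    intro y hy
    induction hy using Algebra.adjoin_induction with
    | mem y hy =>
      obtain ⟨x, hx, i, rfl⟩ := hy
      refine iterate_delta_mem_congrLocus hp hδ₁ hAδ₁ (hgen_mem x hx) (fun k => ?_) i
      refine mem_congrLocus_of_natCast_mul_mem hp ?_ ?_
      · rw [RingHom.coe_pow]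
        exact (frobenius_mapsTo hδ₁ hAδ₁).iterate (k + 1) (hgen_mem x hx)
      · rw [mul_left_comm, hu, mul_one]
        exact congrLocus_mono hrange (hBk k x)
    | algebraMap b =>
      intro k
      exact congrLocus_mul_le (natCast_mem _ p)
        (pow_succ (p : R) (k + 1) ▸ congrLocus_mono hrange (hBk k b))
    | add x y _ _ hx hy => exact fun k => add_mem (hx k) (hy k)
    | mul x y _ _ hx hy => exact fun k => mul_mem (hx k) (hy k)
  have hAδ₂ : Set.MapsTo δ₂ A A := fun y hy =>
    delta_mem_of_delta_mem_of_mem_congrLocus hp hδ₁ hδ₂ (by simpa using hA y hy 0) (hAδ₁ hy)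
  refine Algebra.adjoin_le ?_
  rintro _ ⟨x, hx, i, rfl⟩
  exact hAδ₂.iterate i (hgen_mem x hx)

end Adjoin

theorem stmt9_general (p : ℕ) (hp : p.Prime) {B : Type*} [CommRing B]
    (φ₁ φ₂ : B →+* B) (δB₁ δB₂ : B → B)
    (hδB₁ : ∀ a : B, (p : B) * δB₁ a = φ₁ a - a ^ p)
    (hδB₂ : ∀ a : B, (p : B) * δB₂ a = φ₂ a - a ^ p)
    (hdiff : ∀ a : B, ∃ c : B, δB₁ a - δB₂ a = (p : B) * c)
    (ψ₁ ψ₂ : Localization.Away (p : B) →+* Localization.Away (p : B))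
    (hψ₁ : ∀ b : B, ψ₁ (algebraMap B (Localization.Away (p : B)) b)
        = algebraMap B (Localization.Away (p : B)) (φ₁ b))
    (hψ₂ : ∀ b : B, ψ₂ (algebraMap B (Localization.Away (p : B)) b)
        = algebraMap B (Localization.Away (p : B)) (φ₂ b))
    (δ₁ δ₂ : Localization.Away (p : B) → Localization.Away (p : B))
    (hδ₁ : ∀ y : Localization.Away (p : B), (p : Localization.Away (p : B)) * δ₁ y = ψ₁ y - y ^ p)
    (hδ₂ : ∀ y : Localization.Away (p : B), (p : Localization.Away (p : B)) * δ₂ y = ψ₂ y - y ^ p)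
    (I : Ideal B) :
    Algebra.adjoin B {y : Localization.Away (p : B) | ∃ x ∈ I, ∃ i : ℕ,
        y = δ₁^[i] (algebraMap B (Localization.Away (p : B)) x *
          IsLocalization.Away.invSelf (S := Localization.Away (p : B)) (p : B))} =
      Algebra.adjoin B {y : Localization.Away (p : B) | ∃ x ∈ I, ∃ i : ℕ,
        y = δ₂^[i] (algebraMap B (Localization.Away (p : B)) x *
          IsLocalization.Away.invSelf (S := Localization.Away (p : B)) (p : B))} := by
  have hu : (p : Localization.Away (p : B)) *
      IsLocalization.Away.invSelf (S := Localization.Away (p : B)) (p : B) = 1 := by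
    simpa using IsLocalization.Away.mul_invSelf (S := Localization.Away (p : B)) ((p : ℕ) : B)
  have hreg : IsLeftRegular (p : Localization.Away (p : B)) :=
    (IsUnit.of_mul_eq_one _ hu).isRegular.left
  have hdiff' (a : B) : ∃ c : B, δB₂ a - δB₁ a = (p : B) * c := by
    obtain ⟨c, hc⟩ := hdiff a
    exact ⟨-c, by linear_combination -hc⟩
  apply le_antisymm
  · exact adjoin_iterate_delta_le hp hu hδ₂ hδ₁
      (fun b => ⟨δB₂ b, (delta_algebraMap hδB₂ hψ₂ hreg hδ₂ b).symm⟩)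
      (algebraMap_mem_congrLocus hδB₂ hδB₁ hdiff' hψ₂ hψ₁) I
  · exact adjoin_iterate_delta_le hp hu hδ₁ hδ₂
      (fun b => ⟨δB₁ b, (delta_algebraMap hδB₁ hψ₁ hreg hδ₁ b).symm⟩)
      (algebraMap_mem_congrLocus hδB₁ hδB₂ hdiff hψ₁ hψ₂) I

/-- Let `B` be a `p`-torsion-free commutative ring with two Frobenius
lifts `φ₁, φ₂` (with `δ`-operators `δB₁, δB₂`) such that `δ₁(a) − δ₂(a) ∈ pB` for all
`a ∈ B`; extend everything to `B[1/p]`, giving `ψᵢ` and extended `δ`-operators `δᵢ`.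
Let `I ⊆ B` be an ideal containing `p`. Then the `B`-subalgebras of `B[1/p]`
`adjoin_B{ δ₁^i(x/p) : x ∈ I, i ≥ 0 }` and `adjoin_B{ δ₂^i(x/p) : x ∈ I, i ≥ 0 }`
are equal. -/
theorem stmt9 (p : ℕ) (hp : p.Prime) {B : Type*} [CommRing B]
    (hB : Function.Injective fun b : B => (p : B) * b)
    (φ₁ φ₂ : B →+* B) (δB₁ δB₂ : B → B)
    (hδB₁ : ∀ a : B, (p : B) * δB₁ a = φ₁ a - a ^ p)
    (hδB₂ : ∀ a : B, (p : B) * δB₂ a = φ₂ a - a ^ p)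
    (hdiff : ∀ a : B, ∃ c : B, δB₁ a - δB₂ a = (p : B) * c)
    (ψ₁ ψ₂ : Localization.Away (p : B) →+* Localization.Away (p : B))
    (hψ₁ : ∀ b : B, ψ₁ (algebraMap B (Localization.Away (p : B)) b)
        = algebraMap B (Localization.Away (p : B)) (φ₁ b))
    (hψ₂ : ∀ b : B, ψ₂ (algebraMap B (Localization.Away (p : B)) b)
        = algebraMap B (Localization.Away (p : B)) (φ₂ b))
    (δ₁ δ₂ : Localization.Away (p : B) → Localization.Away (p : B))
    (hδ₁ : ∀ y : Localization.Away (p : B), (p : Localization.Away (p : B)) * δ₁ y = ψ₁ y - y ^ p)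
    (hδ₂ : ∀ y : Localization.Away (p : B), (p : Localization.Away (p : B)) * δ₂ y = ψ₂ y - y ^ p)
    (I : Ideal B) (hI : (p : B) ∈ I) :
    Algebra.adjoin B {y : Localization.Away (p : B) | ∃ x ∈ I, ∃ i : ℕ,
        y = δ₁^[i] (algebraMap B (Localization.Away (p : B)) x *
          IsLocalization.Away.invSelf (S := Localization.Away (p : B)) (p : B))} =
      Algebra.adjoin B {y : Localization.Away (p : B) | ∃ x ∈ I, ∃ i : ℕ,
        y = δ₂^[i] (algebraMap B (Localization.Away (p : B)) x *
          IsLocalization.Away.invSelf (S := Localization.Away (p : B)) (p : B))} :=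
  stmt9_general p hp φ₁ φ₂ δB₁ δB₂ hδB₁ hδB₂ hdiff ψ₁ ψ₂ hψ₁ hψ₂ δ₁ δ₂ hδ₁ hδ₂ I
end

section
/- Fix a prime p. Let R be a p-torsion-free commutative ring with a Frobenius lift φ and associated δ-operator δ, extended to R[1/p]. Let I ⊆ R be an ideal generated by a subset G ⊆ R. Then the R-subalgebra of R[1/p] generated by { δ^j(x/p) : x ∈ I, j ≥ 0 } equals the R-subalgebra of R[1/p] generated by { δ^j(g/p) : g ∈ G, j ≥ 0 }. -/
/-!
Write `A` for the `R`-subalgebra generated by the `δ`-iterates of the `g/p`, `g ∈ G`.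
The identities `δ(a + b) = δ a + δ b - ((a + b)^p - a^p - b^p)/p` (the binomial
coefficients `C(p, k)`, `0 < k < p`, are divisible by `p`) and
`δ(ab) = a^p δ b + b^p δ a + p δ a δ b`, together with `δ(r) = δR(r) ∈ R` on constants,
show that `A` is stable under `δ`. Since `x ↦ x/p` is `R`-linear, `A` contains `x/p` for
every `x` in the ideal generated by `G`, hence all their `δ`-iterates.
-/

section DeltaOperator

variable {p : ℕ} {K : Type*} [CommRing K] {ψ : K →+* K} {δ : K → K}

theorem delta_add (hp : p.Prime) (hpK : IsLeftRegular (p : K))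
    (hδ : ∀ y : K, (p : K) * δ y = ψ y - y ^ p) (a b : K) :
    δ (a + b) = δ a + δ b -
      a * b *
        ∑ k ∈ Finset.Ioo 0 p, a ^ (k - 1) * b ^ (p - k - 1) * ((p.choose k / p : ℕ) : K) := by
  apply hpK
  linear_combination hδ (a + b) - hδ a - hδ b - add_pow_prime_eq hp a b + map_add ψ a b

theorem delta_mul_s12 (hpK : IsLeftRegular (p : K))
    (hδ : ∀ y : K, (p : K) * δ y = ψ y - y ^ p) (a b : K) :
    δ (a * b) = a ^ p * δ b + b ^ p * δ a + p * δ a * δ b := by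
  apply hpK
  linear_combination hδ (a * b) - (a ^ p + p * δ a) * hδ b - ψ b * hδ a + map_mul ψ a b

theorem delta_algebraMap_s12 {R : Type*} [CommRing R] [Algebra R K] {φ : R →+* R} {δR : R → R}
    (hpK : IsLeftRegular (p : K)) (hδ : ∀ y : K, (p : K) * δ y = ψ y - y ^ p)
    (hδR : ∀ a : R, (p : R) * δR a = φ a - a ^ p)
    (hψ : ∀ a : R, ψ (algebraMap R K a) = algebraMap R K (φ a)) (r : R) :
    δ (algebraMap R K r) = algebraMap R K (δR r) := by
  apply hpK
  change (p : K) * _ = (p : K) * _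
  rw [hδ, hψ, ← map_natCast (algebraMap R K) p, ← map_mul, hδR, map_sub, map_pow]

theorem mapsTo_delta_adjoin {R : Type*} [CommRing R] [Algebra R K]
    (hp : p.Prime) (hpK : IsLeftRegular (p : K)) (hδ : ∀ y : K, (p : K) * δ y = ψ y - y ^ p)
    {T : Set K} (hT : Set.MapsTo δ T T)
    (hδR : ∀ r : R, δ (algebraMap R K r) ∈ Algebra.adjoin R T) :
    Set.MapsTo δ (Algebra.adjoin R T) (Algebra.adjoin R T) := by
  intro x hx
  induction hx using Algebra.adjoin_induction with
  | mem t ht => exact Algebra.subset_adjoin (hT ht)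
  | algebraMap r => exact hδR r
  | add a b ha hb iha ihb =>
    rw [delta_add hp hpK hδ]
    refine sub_mem (add_mem iha ihb) (mul_mem (mul_mem ha hb) (sum_mem fun k _ => ?_))
    exact mul_mem (mul_mem (pow_mem ha _) (pow_mem hb _)) (Subalgebra.natCast_mem _ _)
  | mul a b ha hb iha ihb =>
    rw [delta_mul_s12 hpK hδ]
    exact add_mem (add_mem (mul_mem (pow_mem ha p) ihb) (mul_mem (pow_mem hb p) iha))
      (mul_mem (mul_mem (Subalgebra.natCast_mem _ _) iha) ihb)

end DeltaOperator

theorem mapsTo_setOf_iterate {K ι : Type*} (δ : K → K) (s : Set ι) (e : ι → K) :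
    Set.MapsTo δ {y | ∃ i ∈ s, ∃ j : ℕ, y = δ^[j] (e i)}
      {y | ∃ i ∈ s, ∃ j : ℕ, y = δ^[j] (e i)} :=
  fun _ ⟨i, hi, j, hy⟩ => ⟨i, hi, j + 1, by rw [hy, Function.iterate_succ_apply']⟩

theorem adjoin_iterate_le {R K ι : Type*} [CommRing R] [CommRing K] [Algebra R K]
    {δ : K → K} {A : Subalgebra R K} (hA : Set.MapsTo δ A A) {s : Set ι} {e : ι → K}
    (he : ∀ i ∈ s, e i ∈ A) :
    Algebra.adjoin R {y | ∃ i ∈ s, ∃ j : ℕ, y = δ^[j] (e i)} ≤ A :=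
  Algebra.adjoin_le fun _ ⟨i, hi, j, hy⟩ => hy ▸ hA.iterate j (he i hi)

theorem algebraMap_mul_mem_of_mem_span {R A : Type*} [CommRing R] [CommRing A] [Algebra R A]
    {S : Subalgebra R A} {G : Set R} {c : A} (hG : ∀ g ∈ G, algebraMap R A g * c ∈ S)
    {x : R} (hx : x ∈ Ideal.span G) : algebraMap R A x * c ∈ S := by
  have hspan : Ideal.span G ≤
      (Subalgebra.toSubmodule S).comap (LinearMap.mulRight R c ∘ₗ Algebra.linearMap R A) :=
    Submodule.span_le.mpr hG
  exact hspan hx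

theorem stmt12_general (p : ℕ) (hp : p.Prime) {R : Type*} [CommRing R]
    (φ : R →+* R) (δR : R → R)
    (hδR : ∀ a : R, (p : R) * δR a = φ a - a ^ p)
    (ψ : Localization.Away (p : R) →+* Localization.Away (p : R))
    (hψ : ∀ a : R, ψ (algebraMap R (Localization.Away (p : R)) a)
        = algebraMap R (Localization.Away (p : R)) (φ a))
    (δ : Localization.Away (p : R) → Localization.Away (p : R))
    (hδ : ∀ y : Localization.Away (p : R), (p : Localization.Away (p : R)) * δ y = ψ y - y ^ p)
    (G : Set R) :
    Algebra.adjoin R {y : Localization.Away (p : R) | ∃ x ∈ Ideal.span G, ∃ j : ℕ,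
        y = δ^[j] (algebraMap R (Localization.Away (p : R)) x *
          IsLocalization.Away.invSelf (S := Localization.Away (p : R)) (p : R))} =
      Algebra.adjoin R {y : Localization.Away (p : R) | ∃ g ∈ G, ∃ j : ℕ,
        y = δ^[j] (algebraMap R (Localization.Away (p : R)) g *
          IsLocalization.Away.invSelf (S := Localization.Away (p : R)) (p : R))} := by
  have hpK : IsLeftRegular (p : Localization.Away (p : R)) := by
    have hunit := IsLocalization.Away.algebraMap_isUnit (S := Localization.Away (p : R)) (p : R)
    rw [map_natCast] at hunit
    exact hunit.isRegular.left
  refine le_antisymm (adjoin_iterate_le ?_ fun x hx => ?_) (Algebra.adjoin_mono ?_)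
  · refine mapsTo_delta_adjoin hp hpK hδ (mapsTo_setOf_iterate _ _ _) fun r => ?_
    rw [delta_algebraMap_s12 hpK hδ hδR hψ]
    exact Subalgebra.algebraMap_mem _ _
  · refine algebraMap_mul_mem_of_mem_span (fun g hg => ?_) hx
    exact Algebra.subset_adjoin ⟨g, hg, 0, rfl⟩
  · rintro _ ⟨g, hg, j, rfl⟩
    exact ⟨g, Ideal.subset_span hg, j, rfl⟩

/-- Let `R` be a `p`-torsion-free commutative ring with a Frobenius lift
`φ` (with `δ`-operator `δR`), extended to `R[1/p]` as `ψ` with extended `δ`-operator `δ`.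
Let `I ⊆ R` be the ideal generated by a subset `G ⊆ R`. Then the `R`-subalgebra of
`R[1/p]` generated by `{ δ^j(x/p) : x ∈ I, j ≥ 0 }` equals the `R`-subalgebra generated
by `{ δ^j(g/p) : g ∈ G, j ≥ 0 }`. -/
theorem stmt12 (p : ℕ) (hp : p.Prime) {R : Type*} [CommRing R]
    (hR : Function.Injective fun a : R => (p : R) * a)
    (φ : R →+* R) (δR : R → R)
    (hδR : ∀ a : R, (p : R) * δR a = φ a - a ^ p)
    (ψ : Localization.Away (p : R) →+* Localization.Away (p : R))
    (hψ : ∀ a : R, ψ (algebraMap R (Localization.Away (p : R)) a)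
        = algebraMap R (Localization.Away (p : R)) (φ a))
    (δ : Localization.Away (p : R) → Localization.Away (p : R))
    (hδ : ∀ y : Localization.Away (p : R), (p : Localization.Away (p : R)) * δ y = ψ y - y ^ p)
    (G : Set R) :
    Algebra.adjoin R {y : Localization.Away (p : R) | ∃ x ∈ Ideal.span G, ∃ j : ℕ,
        y = δ^[j] (algebraMap R (Localization.Away (p : R)) x *
          IsLocalization.Away.invSelf (S := Localization.Away (p : R)) (p : R))} =
      Algebra.adjoin R {y : Localization.Away (p : R) | ∃ g ∈ G, ∃ j : ℕ,
        y = δ^[j] (algebraMap R (Localization.Away (p : R)) g *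
          IsLocalization.Away.invSelf (S := Localization.Away (p : R)) (p : R))} :=
  stmt12_general p hp φ δR hδR ψ hψ δ hδ G
end
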